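/- In ℝ⁸, the Spin(7) 4-form Φ = dx₁₂₃₄+dx₁₂₅₆+dx₁₃₅₇+dx₁₃₆₈−dx₁₂₇₈−dx₁₄₆₇+dx₁₄₅₈ + (Hodge star of the preceding sum) satisfies Φ = −(1/6)(φ_i² + φ_j² + φ_k² + φ_e² + φ_f² + φ_g² + φ_h²), where φ_i,…,φ_h are the seven 2-forms: φ_i = −dx₁₂+dx₃₄+dx₅₆−dx₇₈, φ_j = −dx₁₃−dx₂₄+dx₅₇+dx₆₈, φ_k = −dx₁₄+dx₂₃+dx₅₈−dx₆₇, φ_e = −dx₁₅−dx₂₆−dx₃₇−dx₄₈, φ_f = −dx₁₆+dx₂₅−dx₃₈+dx₄₇, φ_g = −dx₁₇+dx₂₈+dx₃₅−dx₄₆, φ_h = −dx₁₈−dx₂₇+dx₃₆+dx₄₅. -/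
import Mathlib


/-- The basis 1-forms `dx₁,…,dx₈` of `Λ¹ℝ⁸`, modeled in the exterior algebra of `ℝ⁸`
(indices shifted by one: `dx (a-1)` corresponds to `dxₐ`). -/
noncomputable def dx (a : Fin 8) : ExteriorAlgebra ℝ (Fin 8 → ℝ) :=
  ExteriorAlgebra.ι ℝ (Pi.single a 1)

/-- `dx_{ab} = dxₐ ∧ dx_b`. -/
noncomputable def d (a b : Fin 8) : ExteriorAlgebra ℝ (Fin 8 → ℝ) := dx a * dx b

/-- `dx_{abcd} = dxₐ ∧ dx_b ∧ dx_c ∧ dx_d`. -/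
noncomputable def w (a b c d : Fin 8) : ExteriorAlgebra ℝ (Fin 8 → ℝ) :=
  dx a * dx b * dx c * dx d

/-- The Spin(7) 4-form
`Φ = dx₁₂₃₄+dx₁₂₅₆+dx₁₃₅₇+dx₁₃₆₈−dx₁₂₇₈−dx₁₄₆₇+dx₁₄₅₈ + (Hodge star of this sum)`;
the Hodge star terms are written out explicitly
(`⋆dx₁₂₃₄ = dx₅₆₇₈`, `⋆dx₁₂₅₆ = dx₃₄₇₈`, `⋆dx₁₃₅₇ = dx₂₄₆₈`, `⋆dx₁₃₆₈ = dx₂₄₅₇`,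
`⋆dx₁₂₇₈ = dx₃₄₅₆`, `⋆dx₁₄₆₇ = dx₂₃₅₈`, `⋆dx₁₄₅₈ = dx₂₃₆₇`).
Indices are shifted by one. -/
noncomputable def Φ₇ : ExteriorAlgebra ℝ (Fin 8 → ℝ) :=
  w 0 1 2 3 + w 0 1 4 5 + w 0 2 4 6 + w 0 2 5 7 - w 0 1 6 7 - w 0 3 5 6 + w 0 3 4 7
    + w 4 5 6 7 + w 2 3 6 7 + w 1 3 5 7 + w 1 3 4 6 - w 2 3 4 5 - w 1 2 4 7 + w 1 2 5 6

lemma dx_sq (a : Fin 8) : dx a * dx a = 0 := ExteriorAlgebra.ι_sq_zero _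
lemma dx_anticomm (a b : Fin 8) : dx b * dx a = -(dx a * dx b) := by
  have h := ExteriorAlgebra.ι_sq_zero (R := ℝ) ((Pi.single a 1 + Pi.single b 1 : Fin 8 → ℝ))
  rw [map_add, add_mul, mul_add, mul_add] at h
  change dx a * dx a + dx a * dx b + (dx b * dx a + dx b * dx b) = 0 at h
  rw [dx_sq, dx_sq, zero_add, add_zero] at h
  exact eq_neg_of_add_eq_zero_right h
lemma dx_sq' (a : Fin 8) (x : ExteriorAlgebra ℝ (Fin 8 → ℝ)) : dx a * (dx a * x) = 0 := by
  rw [← mul_assoc, dx_sq, zero_mul]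
lemma dx_anticomm' (a b : Fin 8) (x : ExteriorAlgebra ℝ (Fin 8 → ℝ)) :
    dx b * (dx a * x) = -(dx a * (dx b * x)) := by
  rw [← mul_assoc, dx_anticomm, neg_mul, mul_assoc]
attribute [local simp] dx_sq dx_sq'
@[local simp] lemma s10 : dx 1 * dx 0 = -(dx 0 * dx 1) := dx_anticomm 0 1
@[local simp] lemma n10 (x : ExteriorAlgebra ℝ (Fin 8 → ℝ)) : dx 1 * (dx 0 * x) = -(dx 0 * (dx 1 * x)) := dx_anticomm' 0 1 x
@[local simp] lemma s20 : dx 2 * dx 0 = -(dx 0 * dx 2) := dx_anticomm 0 2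
@[local simp] lemma n20 (x : ExteriorAlgebra ℝ (Fin 8 → ℝ)) : dx 2 * (dx 0 * x) = -(dx 0 * (dx 2 * x)) := dx_anticomm' 0 2 x
@[local simp] lemma s21 : dx 2 * dx 1 = -(dx 1 * dx 2) := dx_anticomm 1 2
@[local simp] lemma n21 (x : ExteriorAlgebra ℝ (Fin 8 → ℝ)) : dx 2 * (dx 1 * x) = -(dx 1 * (dx 2 * x)) := dx_anticomm' 1 2 x
@[local simp] lemma s30 : dx 3 * dx 0 = -(dx 0 * dx 3) := dx_anticomm 0 3
@[local simp] lemma n30 (x : ExteriorAlgebra ℝ (Fin 8 → ℝ)) : dx 3 * (dx 0 * x) = -(dx 0 * (dx 3 * x)) := dx_anticomm' 0 3 x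
@[local simp] lemma s31 : dx 3 * dx 1 = -(dx 1 * dx 3) := dx_anticomm 1 3
@[local simp] lemma n31 (x : ExteriorAlgebra ℝ (Fin 8 → ℝ)) : dx 3 * (dx 1 * x) = -(dx 1 * (dx 3 * x)) := dx_anticomm' 1 3 x
@[local simp] lemma s32 : dx 3 * dx 2 = -(dx 2 * dx 3) := dx_anticomm 2 3
@[local simp] lemma n32 (x : ExteriorAlgebra ℝ (Fin 8 → ℝ)) : dx 3 * (dx 2 * x) = -(dx 2 * (dx 3 * x)) := dx_anticomm' 2 3 x
@[local simp] lemma s40 : dx 4 * dx 0 = -(dx 0 * dx 4) := dx_anticomm 0 4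
@[local simp] lemma n40 (x : ExteriorAlgebra ℝ (Fin 8 → ℝ)) : dx 4 * (dx 0 * x) = -(dx 0 * (dx 4 * x)) := dx_anticomm' 0 4 x
@[local simp] lemma s41 : dx 4 * dx 1 = -(dx 1 * dx 4) := dx_anticomm 1 4
@[local simp] lemma n41 (x : ExteriorAlgebra ℝ (Fin 8 → ℝ)) : dx 4 * (dx 1 * x) = -(dx 1 * (dx 4 * x)) := dx_anticomm' 1 4 x
@[local simp] lemma s42 : dx 4 * dx 2 = -(dx 2 * dx 4) := dx_anticomm 2 4
@[local simp] lemma n42 (x : ExteriorAlgebra ℝ (Fin 8 → ℝ)) : dx 4 * (dx 2 * x) = -(dx 2 * (dx 4 * x)) := dx_anticomm' 2 4 x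
@[local simp] lemma s43 : dx 4 * dx 3 = -(dx 3 * dx 4) := dx_anticomm 3 4
@[local simp] lemma n43 (x : ExteriorAlgebra ℝ (Fin 8 → ℝ)) : dx 4 * (dx 3 * x) = -(dx 3 * (dx 4 * x)) := dx_anticomm' 3 4 x
@[local simp] lemma s50 : dx 5 * dx 0 = -(dx 0 * dx 5) := dx_anticomm 0 5
@[local simp] lemma n50 (x : ExteriorAlgebra ℝ (Fin 8 → ℝ)) : dx 5 * (dx 0 * x) = -(dx 0 * (dx 5 * x)) := dx_anticomm' 0 5 x
@[local simp] lemma s51 : dx 5 * dx 1 = -(dx 1 * dx 5) := dx_anticomm 1 5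
@[local simp] lemma n51 (x : ExteriorAlgebra ℝ (Fin 8 → ℝ)) : dx 5 * (dx 1 * x) = -(dx 1 * (dx 5 * x)) := dx_anticomm' 1 5 x
@[local simp] lemma s52 : dx 5 * dx 2 = -(dx 2 * dx 5) := dx_anticomm 2 5
@[local simp] lemma n52 (x : ExteriorAlgebra ℝ (Fin 8 → ℝ)) : dx 5 * (dx 2 * x) = -(dx 2 * (dx 5 * x)) := dx_anticomm' 2 5 x
@[local simp] lemma s53 : dx 5 * dx 3 = -(dx 3 * dx 5) := dx_anticomm 3 5
@[local simp] lemma n53 (x : ExteriorAlgebra ℝ (Fin 8 → ℝ)) : dx 5 * (dx 3 * x) = -(dx 3 * (dx 5 * x)) := dx_anticomm' 3 5 x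
@[local simp] lemma s54 : dx 5 * dx 4 = -(dx 4 * dx 5) := dx_anticomm 4 5
@[local simp] lemma n54 (x : ExteriorAlgebra ℝ (Fin 8 → ℝ)) : dx 5 * (dx 4 * x) = -(dx 4 * (dx 5 * x)) := dx_anticomm' 4 5 x
@[local simp] lemma s60 : dx 6 * dx 0 = -(dx 0 * dx 6) := dx_anticomm 0 6
@[local simp] lemma n60 (x : ExteriorAlgebra ℝ (Fin 8 → ℝ)) : dx 6 * (dx 0 * x) = -(dx 0 * (dx 6 * x)) := dx_anticomm' 0 6 x
@[local simp] lemma s61 : dx 6 * dx 1 = -(dx 1 * dx 6) := dx_anticomm 1 6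
@[local simp] lemma n61 (x : ExteriorAlgebra ℝ (Fin 8 → ℝ)) : dx 6 * (dx 1 * x) = -(dx 1 * (dx 6 * x)) := dx_anticomm' 1 6 x
@[local simp] lemma s62 : dx 6 * dx 2 = -(dx 2 * dx 6) := dx_anticomm 2 6
@[local simp] lemma n62 (x : ExteriorAlgebra ℝ (Fin 8 → ℝ)) : dx 6 * (dx 2 * x) = -(dx 2 * (dx 6 * x)) := dx_anticomm' 2 6 x
@[local simp] lemma s63 : dx 6 * dx 3 = -(dx 3 * dx 6) := dx_anticomm 3 6
@[local simp] lemma n63 (x : ExteriorAlgebra ℝ (Fin 8 → ℝ)) : dx 6 * (dx 3 * x) = -(dx 3 * (dx 6 * x)) := dx_anticomm' 3 6 x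
@[local simp] lemma s64 : dx 6 * dx 4 = -(dx 4 * dx 6) := dx_anticomm 4 6
@[local simp] lemma n64 (x : ExteriorAlgebra ℝ (Fin 8 → ℝ)) : dx 6 * (dx 4 * x) = -(dx 4 * (dx 6 * x)) := dx_anticomm' 4 6 x
@[local simp] lemma s65 : dx 6 * dx 5 = -(dx 5 * dx 6) := dx_anticomm 5 6
@[local simp] lemma n65 (x : ExteriorAlgebra ℝ (Fin 8 → ℝ)) : dx 6 * (dx 5 * x) = -(dx 5 * (dx 6 * x)) := dx_anticomm' 5 6 x
@[local simp] lemma s70 : dx 7 * dx 0 = -(dx 0 * dx 7) := dx_anticomm 0 7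
@[local simp] lemma n70 (x : ExteriorAlgebra ℝ (Fin 8 → ℝ)) : dx 7 * (dx 0 * x) = -(dx 0 * (dx 7 * x)) := dx_anticomm' 0 7 x
@[local simp] lemma s71 : dx 7 * dx 1 = -(dx 1 * dx 7) := dx_anticomm 1 7
@[local simp] lemma n71 (x : ExteriorAlgebra ℝ (Fin 8 → ℝ)) : dx 7 * (dx 1 * x) = -(dx 1 * (dx 7 * x)) := dx_anticomm' 1 7 x
@[local simp] lemma s72 : dx 7 * dx 2 = -(dx 2 * dx 7) := dx_anticomm 2 7
@[local simp] lemma n72 (x : ExteriorAlgebra ℝ (Fin 8 → ℝ)) : dx 7 * (dx 2 * x) = -(dx 2 * (dx 7 * x)) := dx_anticomm' 2 7 x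
@[local simp] lemma s73 : dx 7 * dx 3 = -(dx 3 * dx 7) := dx_anticomm 3 7
@[local simp] lemma n73 (x : ExteriorAlgebra ℝ (Fin 8 → ℝ)) : dx 7 * (dx 3 * x) = -(dx 3 * (dx 7 * x)) := dx_anticomm' 3 7 x
@[local simp] lemma s74 : dx 7 * dx 4 = -(dx 4 * dx 7) := dx_anticomm 4 7
@[local simp] lemma n74 (x : ExteriorAlgebra ℝ (Fin 8 → ℝ)) : dx 7 * (dx 4 * x) = -(dx 4 * (dx 7 * x)) := dx_anticomm' 4 7 x
@[local simp] lemma s75 : dx 7 * dx 5 = -(dx 5 * dx 7) := dx_anticomm 5 7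
@[local simp] lemma n75 (x : ExteriorAlgebra ℝ (Fin 8 → ℝ)) : dx 7 * (dx 5 * x) = -(dx 5 * (dx 7 * x)) := dx_anticomm' 5 7 x
@[local simp] lemma s76 : dx 7 * dx 6 = -(dx 6 * dx 7) := dx_anticomm 6 7
@[local simp] lemma n76 (x : ExteriorAlgebra ℝ (Fin 8 → ℝ)) : dx 7 * (dx 6 * x) = -(dx 6 * (dx 7 * x)) := dx_anticomm' 6 7 x

set_option maxHeartbeats 4000000 in
/-- In `ℝ⁸` the Spin(7) 4-form `Φ` equals `−(1/6)(φ_i²+φ_j²+φ_k²+φ_e²+φ_f²+φ_g²+φ_h²)`,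
where `φ_i,…,φ_h` are the seven Kähler 2-forms of the right octonion multiplications. -/
theorem spin7_form_eq_sum_of_squares :
    (let φi := -d 0 1 + d 2 3 + d 4 5 - d 6 7
     let φj := -d 0 2 - d 1 3 + d 4 6 + d 5 7
     let φk := -d 0 3 + d 1 2 + d 4 7 - d 5 6
     let φe := -d 0 4 - d 1 5 - d 2 6 - d 3 7
     let φf := -d 0 5 + d 1 4 - d 2 7 + d 3 6
     let φg := -d 0 6 + d 1 7 + d 2 4 - d 3 5
     let φh := -d 0 7 - d 1 6 + d 2 5 + d 3 4
     Φ₇ = (-(1/6) : ℝ) •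
       (φi ^ 2 + φj ^ 2 + φk ^ 2 + φe ^ 2 + φf ^ 2 + φg ^ 2 + φh ^ 2)) := by
  simp only [Φ₇, w, d, pow_two, mul_add, add_mul, neg_mul, mul_neg, neg_neg,
    sub_eq_add_neg, neg_add_rev, mul_assoc]
  simp
  module
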